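/- arXiv:0707.4502 — 4 statements merged into one kernel-verified Lean document; each statement's English description precedes it below -/
import Mathlib

section
/- Let φ(t) = (t^{v₀}, y(t)) with ord y = v₁, gcd(v₀, v₁) = 1. If y(t) = t^{v₁} (the monomial parametrization), then Λ_φ \ Γ_φ = ∅; that is, every value v_φ(h dX + g dY) of a differential with nonzero pullback lies in the semigroup ⟨v₀, v₁⟩. -/
/-! Under `t ↦ (t^a, t^b)` every monomial `X^p Y^q` becomes the single monomial `t^(pa + qb)`,
so the pullback of any `h` is supported in the semigroup `⟨a, b⟩`, and multiplying it by
`d(t^v) = v t^(v-1)` with `v ∈ ⟨a, b⟩` shifts that support by `v - 1`. Hence every nonzero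
coefficient `n` of the pullback of `h dX + g dY` has `n + 1 ∈ ⟨a, b⟩`, the lowest one included,
whatever cancellation occurs. -/

open PowerSeries

/-- Substitution of a pair of one-variable power series (with zero constant term)
into a two-variable power series: `h ↦ h(x(t), y(t))`. -/
noncomputable def psubst (x y : PowerSeries ℂ) (h : MvPowerSeries (Fin 2) ℂ) : PowerSeries ℂ :=
  PowerSeries.mk fun n =>
    ∑ p ∈ Finset.range (n + 1) ×ˢ Finset.range (n + 1),
      MvPowerSeries.coeff (Finsupp.single (0 : Fin 2) p.1 + Finsupp.single (1 : Fin 2) p.2) h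
        * PowerSeries.coeff n (x ^ p.1 * y ^ p.2)

theorem coeff_psubst_X_pow_mem_closure {a b i : ℕ} {h : MvPowerSeries (Fin 2) ℂ}
    (hi : coeff i (psubst (X ^ a) (X ^ b) h) ≠ 0) :
    i ∈ AddSubmonoid.closure ({a, b} : Set ℕ) := by
  rw [psubst, coeff_mk] at hi
  obtain ⟨⟨p, q⟩, -, hpq⟩ := Finset.exists_ne_zero_of_sum_ne_zero hi
  refine (AddSubmonoid.mem_closure_pair _ _ _).2 ⟨p, q, ?_⟩
  by_contra hne
  have hexp : i ≠ a * p + b * q := fun e => hne (by rw [e, smul_eq_mul, smul_eq_mul, mul_comm p,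
    mul_comm q])
  rw [← pow_mul, ← pow_mul, ← pow_add, coeff_X_pow, if_neg hexp, mul_zero] at hpq
  exact hpq rfl

theorem exists_coeff_ne_zero_of_coeff_mul_derivative_X_pow_ne_zero {R : Type*} [CommSemiring R]
    {f : R⟦X⟧} {v n : ℕ} (hn : coeff n (f * d⁄dX R (X ^ v)) ≠ 0) :
    ∃ i, coeff i f ≠ 0 ∧ i + v = n + 1 := by
  rw [coeff_mul] at hn
  obtain ⟨⟨i, j⟩, hij, hne⟩ := Finset.exists_ne_zero_of_sum_ne_zero hn
  rw [Finset.HasAntidiagonal.mem_antidiagonal] at hij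
  have hj : j + 1 = v := by
    by_contra hj
    rw [coeff_derivative, coeff_X_pow, if_neg hj, zero_mul, mul_zero] at hne
    exact hne rfl
  exact ⟨i, left_ne_zero_of_mul hne, by omega⟩

theorem add_one_mem_of_coeff_mul_derivative_X_pow_ne_zero {R : Type*} [CommSemiring R]
    {S : AddSubmonoid ℕ} {f : R⟦X⟧} {v n : ℕ} (hv : v ∈ S) (hf : ∀ i, coeff i f ≠ 0 → i ∈ S)
    (hn : coeff n (f * d⁄dX R (X ^ v)) ≠ 0) : n + 1 ∈ S := by
  obtain ⟨i, hi, hiv⟩ := exists_coeff_ne_zero_of_coeff_mul_derivative_X_pow_ne_zero hn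
  exact hiv ▸ S.add_mem (hf i hi) hv

theorem exists_order_add_one_eq_of_mem {R : Type*} [Semiring R] {S : AddSubmonoid ℕ} {f : R⟦X⟧}
    (hf : f ≠ 0) (hS : ∀ n, coeff n f ≠ 0 → n + 1 ∈ S) : ∃ m ∈ S, f.order + 1 = m := by
  refine ⟨f.order.toNat + 1, hS _ (coeff_order hf), ?_⟩
  rw [Nat.cast_add, coe_toNat_order hf, Nat.cast_one]

theorem exists_order_psubst_X_pow_add_one_eq_mem_closure (v₀ v₁ : ℕ)
    (h g : MvPowerSeries (Fin 2) ℂ)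
    (hne : psubst (X ^ v₀) (X ^ v₁) h * d⁄dX ℂ (X ^ v₀) +
      psubst (X ^ v₀) (X ^ v₁) g * d⁄dX ℂ (X ^ v₁) ≠ 0) :
    ∃ m ∈ AddSubmonoid.closure ({v₀, v₁} : Set ℕ),
      (psubst (X ^ v₀) (X ^ v₁) h * d⁄dX ℂ (X ^ v₀) +
        psubst (X ^ v₀) (X ^ v₁) g * d⁄dX ℂ (X ^ v₁)).order + 1 = m := by
  have hv₀ : v₀ ∈ AddSubmonoid.closure ({v₀, v₁} : Set ℕ) :=
    AddSubmonoid.subset_closure (Set.mem_insert _ _)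
  have hv₁ : v₁ ∈ AddSubmonoid.closure ({v₀, v₁} : Set ℕ) :=
    AddSubmonoid.subset_closure (Set.mem_insert_of_mem _ rfl)
  refine exists_order_add_one_eq_of_mem hne fun n hn => ?_
  rw [map_add] at hn
  by_cases hh : coeff n (psubst (X ^ v₀) (X ^ v₁) h * d⁄dX ℂ (X ^ v₀)) = 0
  · rw [hh, zero_add] at hn
    exact add_one_mem_of_coeff_mul_derivative_X_pow_ne_zero hv₁
      (fun _ => coeff_psubst_X_pow_mem_closure) hn
  · exact add_one_mem_of_coeff_mul_derivative_X_pow_ne_zero hv₀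
      (fun _ => coeff_psubst_X_pow_mem_closure) hh

theorem monomial_lambda_sub_gamma_empty_general (v₀ v₁ : ℕ) :
    ∀ h g : MvPowerSeries (Fin 2) ℂ,
      psubst (PowerSeries.X ^ v₀) (PowerSeries.X ^ v₁) h *
          (PowerSeries.X ^ v₀ : PowerSeries ℂ).derivativeFun +
        psubst (PowerSeries.X ^ v₀) (PowerSeries.X ^ v₁) g *
          (PowerSeries.X ^ v₁ : PowerSeries ℂ).derivativeFun ≠ 0 →
      ∃ a b : ℕ,
        (psubst (PowerSeries.X ^ v₀) (PowerSeries.X ^ v₁) h *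
            (PowerSeries.X ^ v₀ : PowerSeries ℂ).derivativeFun +
          psubst (PowerSeries.X ^ v₀) (PowerSeries.X ^ v₁) g *
            (PowerSeries.X ^ v₁ : PowerSeries ℂ).derivativeFun).order + 1 =
          ((a * v₀ + b * v₁ : ℕ) : ℕ∞) := by
  intro h g hne
  obtain ⟨m, hm, hord⟩ := exists_order_psubst_X_pow_add_one_eq_mem_closure v₀ v₁ h g hne
  obtain ⟨a, b, rfl⟩ := (AddSubmonoid.mem_closure_pair _ _ _).1 hm
  simp only [smul_eq_mul] at hord
  exact ⟨a, b, hord⟩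

/-- For the monomial parametrization `φ(t) = (t^{v₀}, t^{v₁})` with `gcd(v₀,v₁) = 1`,
`Λ_φ \ Γ_φ = ∅`: every value of a differential with nonzero pullback lies in `⟨v₀, v₁⟩`. -/
theorem monomial_lambda_sub_gamma_empty (v₀ v₁ : ℕ) (h0 : 0 < v₀) (h01 : v₀ < v₁)
    (hcop : Nat.Coprime v₀ v₁) :
    ∀ h g : MvPowerSeries (Fin 2) ℂ,
      psubst (PowerSeries.X ^ v₀) (PowerSeries.X ^ v₁) h *
          (PowerSeries.X ^ v₀ : PowerSeries ℂ).derivativeFun +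
        psubst (PowerSeries.X ^ v₀) (PowerSeries.X ^ v₁) g *
          (PowerSeries.X ^ v₁ : PowerSeries ℂ).derivativeFun ≠ 0 →
      ∃ a b : ℕ,
        (psubst (PowerSeries.X ^ v₀) (PowerSeries.X ^ v₁) h *
            (PowerSeries.X ^ v₀ : PowerSeries ℂ).derivativeFun +
          psubst (PowerSeries.X ^ v₀) (PowerSeries.X ^ v₁) g *
            (PowerSeries.X ^ v₁ : PowerSeries ℂ).derivativeFun).order + 1 =
          ((a * v₀ + b * v₁ : ℕ) : ℕ∞) :=
  monomial_lambda_sub_gamma_empty_general v₀ v₁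
end

section
/- (Elimination Criterion EC1, arithmetic core) Let φ(t) = (t^{v₀}, t^{v₁} + Σ_{i>v₁} a_i t^i) with gcd conditions as in a Puiseux parametrization, and let j > v₁ with j ∈ Γ_φ. Then there exists q ∈ ℂ⟦X,Y⟧ with v_φ(q) = j such that the parametrization φ₁(t) = (t^{v₀}, y(t) − c·q(t^{v₀}, y(t))) for suitable c ∈ ℂ has coefficients a'_i = a_i for v₁ < i < j and a'_j = 0. -/
open PowerSeries

namespace PowerSeries

theorem coeff_sub_C_mul_of_lt_order {R : Type*} [Ring R] (f s : R⟦X⟧) (c : R) {i : ℕ}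
    (hi : (i : ℕ∞) < s.order) : coeff i (f - C c * s) = coeff i f := by
  rw [map_sub, coeff_C_mul, coeff_of_lt_order i hi, mul_zero, sub_zero]

theorem coeff_sub_C_div_mul_eq_zero {K : Type*} [Field K] (f s : K⟦X⟧) {j : ℕ}
    (hs : s.order = j) : coeff j (f - C (coeff j f / coeff j s) * s) = 0 := by
  rw [map_sub, coeff_C_mul, div_mul_cancel₀ _ (order_eq_nat.mp hs).1, sub_self]

end PowerSeries

theorem elimination_criterion_EC1_general (v₀ v₁ : ℕ) (y : PowerSeries ℂ)
    (j : ℕ)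
    (hjΓ : ∃ h : MvPowerSeries (Fin 2) ℂ,
      psubst (PowerSeries.X ^ v₀) y h ≠ 0 ∧
      (psubst (PowerSeries.X ^ v₀) y h).order = (j : ℕ∞)) :
    ∃ (q : MvPowerSeries (Fin 2) ℂ) (c : ℂ),
      psubst (PowerSeries.X ^ v₀) y q ≠ 0 ∧
      (psubst (PowerSeries.X ^ v₀) y q).order = (j : ℕ∞) ∧
      (∀ i, v₁ < i → i < j →
        PowerSeries.coeff i
            (y - PowerSeries.C c * psubst (PowerSeries.X ^ v₀) y q) =
          PowerSeries.coeff i y) ∧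
      PowerSeries.coeff j
          (y - PowerSeries.C c * psubst (PowerSeries.X ^ v₀) y q) = 0 := by
  obtain ⟨q, hq, hord⟩ := hjΓ
  set s := psubst (PowerSeries.X ^ v₀) y q
  refine ⟨q, PowerSeries.coeff j y / PowerSeries.coeff j s, hq, hord, fun i _ hij => ?_,
    PowerSeries.coeff_sub_C_div_mul_eq_zero y s hord⟩
  exact PowerSeries.coeff_sub_C_mul_of_lt_order y s _ (by rw [hord]; exact_mod_cast hij)

/-- Elimination Criterion EC1 (arithmetic core): if `j > v₁` lies in the semigroup of values
of `φ(t) = (t^{v₀}, y(t))`, then there is `q ∈ ℂ⟦X,Y⟧` with `v_φ(q) = j` and `c ∈ ℂ` such that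
`y − c·q(φ(t))` has the same coefficients `a_i` for `v₁ < i < j` and vanishing coefficient
at `t^j`. -/
theorem elimination_criterion_EC1 (v₀ v₁ : ℕ) (h0 : 0 < v₀) (h01 : v₀ < v₁)
    (hnd : ¬ v₀ ∣ v₁) (y : PowerSeries ℂ)
    (hy1 : PowerSeries.coeff v₁ y = 1)
    (hylt : ∀ i, i < v₁ → PowerSeries.coeff i y = 0)
    (j : ℕ) (hj : v₁ < j)
    (hjΓ : ∃ h : MvPowerSeries (Fin 2) ℂ,
      psubst (PowerSeries.X ^ v₀) y h ≠ 0 ∧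
      (psubst (PowerSeries.X ^ v₀) y h).order = (j : ℕ∞)) :
    ∃ (q : MvPowerSeries (Fin 2) ℂ) (c : ℂ),
      psubst (PowerSeries.X ^ v₀) y q ≠ 0 ∧
      (psubst (PowerSeries.X ^ v₀) y q).order = (j : ℕ∞) ∧
      (∀ i, v₁ < i → i < j →
        PowerSeries.coeff i
            (y - PowerSeries.C c * psubst (PowerSeries.X ^ v₀) y q) =
          PowerSeries.coeff i y) ∧
      PowerSeries.coeff j
          (y - PowerSeries.C c * psubst (PowerSeries.X ^ v₀) y q) = 0 :=
  elimination_criterion_EC1_general v₀ v₁ y j hjΓ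
end

section
/- Let φ(t) = (t^{v₀}, y(t)) and φ₁(t₁) = (t₁^{v₀}, y₁(t₁)) be two Puiseux parametrizations (ord y = ord y₁ = v₁, leading coefficients 1). Suppose σ(X,Y) = (r^{v₀}X + p, r^{v₁}Y + q) with r ∈ ℂ*, p, q ∈ ℂ⟦X,Y⟧, v_φ(p) > v₀, v_φ(q) > v₁, and ρ(t) = r·t·(1 + φ*(p)/(r^{v₀}t^{v₀}))^{1/v₀}. Then ρ is a well-defined automorphism of (ℂ,0) (i.e., ρ ∈ t·ℂ⟦t⟧ with ρ'(0) = r ≠ 0) and (σ ∘ φ ∘ ρ^{-1})(t₁) has first coordinate exactly t₁^{v₀}. -/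
/-!
The root `(1 + u)^{1/v₀}` is the binomial series `(1 + X)^{1/v₀}` with `u` substituted for `X`:
exponents of binomial series add, so its `v₀`-th power is `1 + X`, and substitution of a series
without constant term is a ring homomorphism. Writing `φ*(p) = X^{v₀+1} Q`, the series
`ρ = r X (1 + X Q / r^{v₀})^{1/v₀}` then has `ρ^{v₀} = r^{v₀} X^{v₀} + φ*(p)`.
-/

open PowerSeries

namespace PowerSeries

section

variable {A : Type*} [CommRing A]

theorem constantCoeff_subst_of_constantCoeff_eq_zero {u : A⟦X⟧} (hu : constantCoeff u = 0)
    (f : A⟦X⟧) : constantCoeff (f.subst u) = constantCoeff f := by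
  have hu' : MvPowerSeries.constantCoeff u = 0 := hu
  refine (constantCoeff_subst (HasSubst.of_constantCoeff_zero' hu) f).trans ?_
  rw [finsum_eq_single _ 0 fun d hd ↦ by simp [hu', zero_pow hd]]
  simp

variable [Algebra ℚ A]

theorem binomialSeries_pow (r : ℚ) (n : ℕ) :
    binomialSeries A r ^ n = binomialSeries A (n * r) := by
  induction n with
  | zero => simp
  | succ n ih => rw [pow_succ, ih, ← binomialSeries_add]; push_cast; ring_nf

theorem binomialSeries_inv_pow {m : ℕ} (hm : m ≠ 0) :
    binomialSeries A (m⁻¹ : ℚ) ^ m = 1 + X := by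
  rw [binomialSeries_pow, mul_inv_cancel₀ (by exact_mod_cast hm), ← Nat.cast_one,
    binomialSeries_nat, pow_one]

theorem exists_pow_eq_one_add {m : ℕ} (hm : m ≠ 0) {u : A⟦X⟧} (hu : constantCoeff u = 0) :
    ∃ s : A⟦X⟧, constantCoeff s = 1 ∧ s ^ m = 1 + u := by
  have hsubst : HasSubst u := HasSubst.of_constantCoeff_zero' hu
  refine ⟨(binomialSeries A (m⁻¹ : ℚ)).subst u, ?_, ?_⟩
  · rw [constantCoeff_subst_of_constantCoeff_eq_zero hu, binomialSeries_constantCoeff]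
  · rw [← subst_pow hsubst, binomialSeries_inv_pow hm, ← coe_substAlgHom hsubst, map_add,
      map_one, coe_substAlgHom, subst_X hsubst]

end

theorem exists_pow_eq_C_mul_X_pow_add {K : Type*} [Field K] [CharZero K] {n : ℕ} (hn : n ≠ 0)
    {r : K} (hr : r ≠ 0) {P : K⟦X⟧} (hP : (n : ℕ∞) < P.order) :
    ∃ ρ : K⟦X⟧, constantCoeff ρ = 0 ∧ coeff 1 ρ = r ∧ ρ ^ n = C (r ^ n) * X ^ n + P := by
  obtain ⟨Q, rfl⟩ : X ^ (n + 1) ∣ P := X_pow_dvd_iff.mpr fun i hi ↦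
    coeff_of_lt_order _ (lt_of_le_of_lt (by exact_mod_cast Nat.lt_succ_iff.mp hi) hP)
  obtain ⟨s, hs0, hs⟩ := exists_pow_eq_one_add hn (u := C (r ^ n)⁻¹ * X * Q) (by simp)
  refine ⟨X * (C r * s), by simp, by simp [coeff_succ_X_mul, hs0], ?_⟩
  have hrn : C (r ^ n) * C (r ^ n)⁻¹ = 1 := by
    rw [← map_mul, mul_inv_cancel₀ (pow_ne_zero n hr), map_one]
  rw [mul_pow, mul_pow, hs, ← map_pow]
  linear_combination (X ^ (n + 1) * Q) * hrn

end PowerSeries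

theorem reparametrization_exists_general (v₀ : ℕ) (h0 : 0 < v₀)
    (y : PowerSeries ℂ)
    (r : ℂ) (hr : r ≠ 0) (p : MvPowerSeries (Fin 2) ℂ)
    (hp : ((v₀ : ℕ) : ℕ∞) < (psubst (PowerSeries.X ^ v₀) y p).order) :
    ∃ ρ : PowerSeries ℂ,
      PowerSeries.constantCoeff ρ = 0 ∧
      PowerSeries.coeff 1 ρ = r ∧
      ρ ^ v₀ = PowerSeries.C (r ^ v₀) * PowerSeries.X ^ v₀ +
        psubst (PowerSeries.X ^ v₀) y p :=
  exists_pow_eq_C_mul_X_pow_add h0.ne' hr hp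

/-- If `v_φ(p) > v₀` and `r ≠ 0`, then the reparametrization
`ρ(t) = r·t·(1 + φ*(p)/(r^{v₀}t^{v₀}))^{1/v₀}` is a well-defined automorphism germ of `(ℂ,0)`
(`ρ ∈ t·ℂ⟦t⟧` with `ρ'(0) = r ≠ 0`) and satisfies `ρ(t)^{v₀} = r^{v₀}·t^{v₀} + p(φ(t))`,
so that the first coordinate of `σ ∘ φ ∘ ρ⁻¹` is exactly `t₁^{v₀}`. -/
theorem reparametrization_exists (v₀ v₁ : ℕ) (h0 : 0 < v₀) (h01 : v₀ < v₁)
    (y : PowerSeries ℂ)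
    (hy1 : PowerSeries.coeff v₁ y = 1)
    (hylt : ∀ i, i < v₁ → PowerSeries.coeff i y = 0)
    (r : ℂ) (hr : r ≠ 0) (p : MvPowerSeries (Fin 2) ℂ)
    (hp : ((v₀ : ℕ) : ℕ∞) < (psubst (PowerSeries.X ^ v₀) y p).order) :
    ∃ ρ : PowerSeries ℂ,
      PowerSeries.constantCoeff ρ = 0 ∧
      PowerSeries.coeff 1 ρ = r ∧
      ρ ^ v₀ = PowerSeries.C (r ^ v₀) * PowerSeries.X ^ v₀ +
        psubst (PowerSeries.X ^ v₀) y p :=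
  reparametrization_exists_general v₀ h0 y r hr p hp
end

section
/- Let φ(t) = (t^{v₀}, y(t)) with y(t) = Σ_{i≥v₁} a_i t^i, a_{v₁} = 1. For any k > v₁ and b ∈ ℂ*, the vector (0, b t^k) lies in the tangent space T_φ(𝒜₁^k · φ) = { j^k((x'(t), y'(t))·ε + (φ*(g), φ*(h))) : ε ∈ t²ℂ⟦t⟧, g, h ∈ 𝔪² } if and only if there exist g, h ∈ 𝔪² ⊂ ℂ⟦X,Y⟧ with ord_t(φ*(h)·x'(t) − φ*(g)·y'(t)) = k + v₀ − 1. -/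
/-! The identity `x' (y' ε + φ*h) - y' (x' ε + φ*g) = φ*h x' - φ*g y'` carries the argument.
If `x' ε + φ*g ≡ 0` and `y' ε + φ*h ≡ b t^k` modulo `t^(k+1)`, then, as `t^(v₀-1)` divides
both `x' = v₀ t^(v₀-1)` and `y'`, the right-hand side is `v₀ b t^(k+v₀-1)` modulo `t^(k+v₀)`.
Conversely, `φ*g` is divisible by `t^(2v₀)`, so `ε := -φ*g / x'` lies in `t²ℂ⟦t⟧` and kills the
first component; the identity then shows `y' ε + φ*h` has order exactly `k`, and rescaling
`(ε, g, h)` by a constant makes its leading coefficient `b`. -/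

open PowerSeries

/-- The maximal ideal `(X, Y)` of `ℂ⟦X,Y⟧`. -/
noncomputable def mIdeal : Ideal (MvPowerSeries (Fin 2) ℂ) :=
  Ideal.span {MvPowerSeries.X 0, MvPowerSeries.X 1}

namespace PowerSeries

section CommRing

variable {R : Type*} [CommRing R]

theorem trunc_eq_zero_iff_X_pow_dvd {n : ℕ} {f : R⟦X⟧} : trunc n f = 0 ↔ X ^ n ∣ f := by
  simp only [X_pow_dvd_iff, Polynomial.ext_iff, coeff_trunc, Polynomial.coeff_zero]
  exact forall_congr' fun m => by by_cases hm : m < n <;> simp [hm]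

theorem trunc_eq_trunc_iff_X_pow_dvd_sub {n : ℕ} {f g : R⟦X⟧} :
    trunc n f = trunc n g ↔ X ^ n ∣ f - g := by
  rw [← trunc_eq_zero_iff_X_pow_dvd, trunc_sub, sub_eq_zero]

theorem X_pow_dvd_derivative {n : ℕ} {f : R⟦X⟧} (hf : X ^ (n + 1) ∣ f) :
    X ^ n ∣ d⁄dX R f := by
  rw [X_pow_dvd_iff] at hf ⊢
  intro m hm
  rw [coeff_derivative, hf (m + 1) (by omega), zero_mul]

theorem derivative_X_pow (n : ℕ) : d⁄dX R (X ^ n) = C (n : R) * X ^ (n - 1) := by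
  rw [derivative_pow, derivative_X, mul_one, map_natCast]

theorem order_C_mul_X_pow_add_X_pow_succ_mul [Nontrivial R] {c : R} (hc : c ≠ 0) (n : ℕ)
    (r : R⟦X⟧) : (C c * X ^ n + X ^ (n + 1) * r).order = (n : ℕ∞) := by
  have hlead : (C c * X ^ n).order = (n : ℕ∞) := by
    rw [← monomial_eq_C_mul_X_pow, order_monomial_of_ne_zero n c hc]
  have htail : ((n + 1 : ℕ) : ℕ∞) ≤ (X ^ (n + 1) * r).order :=
    (order_X_pow (R := R) (n + 1)).symm.le.trans ((le_self_add).trans (le_order_mul _ _))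
  have hlt : (n : ℕ∞) < (X ^ (n + 1) * r).order :=
    lt_of_lt_of_le (by exact_mod_cast n.lt_succ_self) htail
  rw [order_add_of_order_ne _ _ (hlead.trans_lt hlt).ne, hlead, min_eq_left hlt.le]

theorem order_mul_sub_mul_eq [Nontrivial R] {a b : R} (hab : a * b ≠ 0) {m k : ℕ}
    {ε G H y' : R⟦X⟧} (hy' : X ^ m ∣ y') (hG : X ^ (k + 1) ∣ C a * X ^ m * ε + G)
    (hH : X ^ (k + 1) ∣ y' * ε + H - C b * X ^ k) :
    (H * (C a * X ^ m) - G * y').order = ((k + m : ℕ) : ℕ∞) := by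
  obtain ⟨α, hα⟩ := hG
  obtain ⟨β, hβ⟩ := hH
  obtain ⟨η, rfl⟩ := hy'
  have hD : H * (C a * X ^ m) - G * (X ^ m * η) =
      C (a * b) * X ^ (k + m) + X ^ (k + m + 1) * (C a * β - η * α) := by
    rw [map_mul]
    linear_combination (C a * X ^ m) * hβ - X ^ m * η * hα
  rw [hD, order_C_mul_X_pow_add_X_pow_succ_mul hab]

end CommRing

section Field

variable {K : Type*} [Field K]

theorem exists_X_sq_dvd_and_C_mul_X_pow_mul_add_eq_zero {a : K} (ha : a ≠ 0) {m : ℕ}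
    {G : K⟦X⟧} (hG : X ^ (m + 2) ∣ G) :
    ∃ ε, X ^ 2 ∣ ε ∧ C a * X ^ m * ε + G = 0 := by
  obtain ⟨G₁, rfl⟩ := hG
  refine ⟨-(C a⁻¹ * X ^ 2 * G₁), Dvd.intro (-(C a⁻¹ * G₁)) (by ring), ?_⟩
  have hinv : C a * C a⁻¹ = (1 : K⟦X⟧) := by rw [← map_mul, mul_inv_cancel₀ ha, map_one]
  linear_combination (-(X ^ m * X ^ 2 * G₁)) * hinv

theorem exists_X_pow_succ_dvd_C_mul_sub {f : K⟦X⟧} {k : ℕ} (hf : f.order = k) (b : K) :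
    ∃ c, X ^ (k + 1) ∣ C c * f - C b * X ^ k := by
  obtain ⟨hfk, hlow⟩ := order_eq_nat.1 hf
  refine ⟨b / coeff k f, X_pow_dvd_iff.2 fun i hi => ?_⟩
  rw [map_sub, coeff_C_mul, coeff_C_mul_X_pow]
  rcases (Nat.lt_succ_iff.1 hi).lt_or_eq with hik | rfl
  · rw [hlow i hik, if_neg hik.ne, mul_zero, sub_zero]
  · rw [if_pos rfl, div_mul_cancel₀ _ hfk, sub_self]

theorem exists_of_order_mul_sub_mul_eq {a : K} (ha : a ≠ 0) (b : K) {m k : ℕ}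
    {G H y' : K⟦X⟧} (hG : X ^ (m + 2) ∣ G)
    (hD : (H * (C a * X ^ m) - G * y').order = ((k + m : ℕ) : ℕ∞)) :
    ∃ ε c, X ^ 2 ∣ ε ∧ C a * X ^ m * ε + C c * G = 0 ∧
      X ^ (k + 1) ∣ y' * ε + C c * H - C b * X ^ k := by
  obtain ⟨ε, hε2, hε⟩ := exists_X_sq_dvd_and_C_mul_X_pow_mul_add_eq_zero ha hG
  have hB : C a * X ^ m * (y' * ε + H) = H * (C a * X ^ m) - G * y' := by
    linear_combination y' * hε
  have hBord : (y' * ε + H).order = k := by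
    rw [← hB, order_mul, ← monomial_eq_C_mul_X_pow, order_monomial_of_ne_zero m a ha,
      Nat.cast_add, add_comm] at hD
    exact WithTop.add_right_cancel (ENat.natCast_ne_top m) hD
  obtain ⟨c, hc⟩ := exists_X_pow_succ_dvd_C_mul_sub hBord b
  refine ⟨C c * ε, c, dvd_mul_of_dvd_right hε2 _, by linear_combination C c * hε, ?_⟩
  convert hc using 2
  ring

end Field

end PowerSeries

namespace MvPowerSeries

theorem le_order_of_mem_pow {σ R : Type*} [CommRing R] {I : Ideal (MvPowerSeries σ R)}
    (hI : I ≤ RingHom.ker constantCoeff) {n : ℕ} {f : MvPowerSeries σ R} (hf : f ∈ I ^ n) :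
    (n : ℕ∞) ≤ f.order := by
  induction n generalizing f with
  | zero => simp
  | succ n ih =>
    rw [pow_succ] at hf
    refine Submodule.mul_induction_on hf (fun a ha b hb => ?_) (fun a b ha hb => ?_)
    · calc ((n + 1 : ℕ) : ℕ∞) = n + 1 := by push_cast; rfl
        _ ≤ a.order + b.order :=
          add_le_add (ih ha) (one_le_order_iff_constCoeff_eq_zero.2 (hI hb))
        _ ≤ (a * b).order := le_order_mul
    · exact (le_min ha hb).trans min_order_le_add

end MvPowerSeries

theorem mIdeal_le_ker_constantCoeff : mIdeal ≤ RingHom.ker MvPowerSeries.constantCoeff := by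
  rw [mIdeal, Ideal.span_le]
  rintro f (rfl | rfl) <;> simp

theorem psubst_C_mul (x y : ℂ⟦X⟧) (c : ℂ) (g : MvPowerSeries (Fin 2) ℂ) :
    psubst x y (MvPowerSeries.C c * g) = C c * psubst x y g := by
  ext n
  simp only [psubst, coeff_C_mul, coeff_mk, Finset.mul_sum, MvPowerSeries.coeff_C_mul, mul_assoc]

theorem X_pow_mul_dvd_psubst {x y : ℂ⟦X⟧} {a d : ℕ} (hx : X ^ a ∣ x) (hy : X ^ a ∣ y)
    {g : MvPowerSeries (Fin 2) ℂ} (hg : (d : ℕ∞) ≤ g.order) :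
    X ^ (d * a) ∣ psubst x y g := by
  refine X_pow_dvd_iff.2 fun n hn => ?_
  rw [psubst, coeff_mk]
  refine Finset.sum_eq_zero fun ⟨i, j⟩ _ => ?_
  by_cases hij : i + j < d
  · rw [MvPowerSeries.coeff_of_lt_order, zero_mul]
    refine lt_of_lt_of_le ?_ hg
    have hij' : ((i + j : ℕ) : ℕ∞) < d := by exact_mod_cast hij
    simpa [map_add, Finsupp.degree_single] using hij'
  · have hdvd : X ^ (a * (i + j)) ∣ x ^ i * y ^ j := by
      rw [mul_add, pow_add, pow_mul, pow_mul]
      exact mul_dvd_mul (pow_dvd_pow_of_dvd hx i) (pow_dvd_pow_of_dvd hy j)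
    rw [X_pow_dvd_iff.1 hdvd n (by nlinarith), mul_zero]

theorem tangent_space_criterion_general (v₀ v₁ k : ℕ) (h0 : 0 < v₀) (h01 : v₀ < v₁)
    (b : ℂ) (hb : b ≠ 0) (y : PowerSeries ℂ)
    (hylt : ∀ i, i < v₁ → PowerSeries.coeff i y = 0) :
    (∃ ε : PowerSeries ℂ, (∀ i, i < 2 → PowerSeries.coeff i ε = 0) ∧
      ∃ g h : MvPowerSeries (Fin 2) ℂ, g ∈ mIdeal ^ 2 ∧ h ∈ mIdeal ^ 2 ∧
        PowerSeries.trunc (k + 1)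
            ((PowerSeries.X ^ v₀ : PowerSeries ℂ).derivativeFun * ε +
              psubst (PowerSeries.X ^ v₀) y g) = 0 ∧
        PowerSeries.trunc (k + 1)
            (y.derivativeFun * ε + psubst (PowerSeries.X ^ v₀) y h) =
          PowerSeries.trunc (k + 1) (PowerSeries.C b * PowerSeries.X ^ k)) ↔
    ∃ g h : MvPowerSeries (Fin 2) ℂ, g ∈ mIdeal ^ 2 ∧ h ∈ mIdeal ^ 2 ∧
      (psubst (PowerSeries.X ^ v₀) y h *
          (PowerSeries.X ^ v₀ : PowerSeries ℂ).derivativeFun -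
        psubst (PowerSeries.X ^ v₀) y g * y.derivativeFun).order =
        ((k + v₀ - 1 : ℕ) : ℕ∞) := by
  have hv₀ : (v₀ : ℂ) ≠ 0 := Nat.cast_ne_zero.2 h0.ne'
  have hy : X ^ v₀ ∣ y := (pow_dvd_pow X h01.le).trans (X_pow_dvd_iff.2 hylt)
  have hdx : (X ^ v₀ : ℂ⟦X⟧).derivativeFun = C (v₀ : ℂ) * X ^ (v₀ - 1) := derivative_X_pow v₀
  have hdy : X ^ (v₀ - 1) ∣ d⁄dX ℂ y := X_pow_dvd_derivative (by rwa [Nat.sub_add_cancel h0])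
  have hG : ∀ g ∈ mIdeal ^ 2, X ^ (v₀ - 1 + 2) ∣ psubst (X ^ v₀) y g := fun g hg =>
    (pow_dvd_pow X (by omega)).trans <|
      X_pow_mul_dvd_psubst dvd_rfl hy
        (MvPowerSeries.le_order_of_mem_pow mIdeal_le_ker_constantCoeff hg)
  rw [hdx, show k + v₀ - 1 = k + (v₀ - 1) by omega]
  constructor
  · rintro ⟨ε, -, g, h, hg, hh, hA, hB⟩
    rw [trunc_eq_zero_iff_X_pow_dvd] at hA
    rw [trunc_eq_trunc_iff_X_pow_dvd_sub] at hB
    exact ⟨g, h, hg, hh, order_mul_sub_mul_eq (mul_ne_zero hv₀ hb) hdy hA hB⟩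
  · rintro ⟨g, h, hg, hh, hD⟩
    obtain ⟨ε, c, hε, hA, hB⟩ := exists_of_order_mul_sub_mul_eq hv₀ b (hG g hg) hD
    refine ⟨ε, X_pow_dvd_iff.1 hε, MvPowerSeries.C c * g, MvPowerSeries.C c * h,
      Ideal.mul_mem_left _ _ hg, Ideal.mul_mem_left _ _ hh, ?_, ?_⟩
    · rw [psubst_C_mul, hA, map_zero]
    · rw [psubst_C_mul, trunc_eq_trunc_iff_X_pow_dvd_sub]
      exact hB

/-- (Lemma 3.1) For `k > v₁` and `b ≠ 0`, the vector `(0, b t^k)` lies in the tangent space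
`T_φ(𝒜₁^k · φ) = { j^k((x'ε + φ*(g), y'ε + φ*(h))) : ε ∈ t²ℂ⟦t⟧, g, h ∈ 𝔪² }` iff there are
`g, h ∈ 𝔪²` with `ord_t(φ*(h)·x' − φ*(g)·y') = k + v₀ − 1`. -/
theorem tangent_space_criterion (v₀ v₁ k : ℕ) (h0 : 0 < v₀) (h01 : v₀ < v₁) (hk : v₁ < k)
    (b : ℂ) (hb : b ≠ 0) (y : PowerSeries ℂ)
    (hy1 : PowerSeries.coeff v₁ y = 1)
    (hylt : ∀ i, i < v₁ → PowerSeries.coeff i y = 0) :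
    (∃ ε : PowerSeries ℂ, (∀ i, i < 2 → PowerSeries.coeff i ε = 0) ∧
      ∃ g h : MvPowerSeries (Fin 2) ℂ, g ∈ mIdeal ^ 2 ∧ h ∈ mIdeal ^ 2 ∧
        PowerSeries.trunc (k + 1)
            ((PowerSeries.X ^ v₀ : PowerSeries ℂ).derivativeFun * ε +
              psubst (PowerSeries.X ^ v₀) y g) = 0 ∧
        PowerSeries.trunc (k + 1)
            (y.derivativeFun * ε + psubst (PowerSeries.X ^ v₀) y h) =
          PowerSeries.trunc (k + 1) (PowerSeries.C b * PowerSeries.X ^ k)) ↔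
    ∃ g h : MvPowerSeries (Fin 2) ℂ, g ∈ mIdeal ^ 2 ∧ h ∈ mIdeal ^ 2 ∧
      (psubst (PowerSeries.X ^ v₀) y h *
          (PowerSeries.X ^ v₀ : PowerSeries ℂ).derivativeFun -
        psubst (PowerSeries.X ^ v₀) y g * y.derivativeFun).order =
        ((k + v₀ - 1 : ℕ) : ℕ∞) :=
  tangent_space_criterion_general v₀ v₁ k h0 h01 b hb y hylt
end
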